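/- arXiv:2309.10276 — 3 statements merged into one kernel-verified Lean document; each statement's English description precedes it below -/
import Mathlib

section
/- For a Markov chain (x_1, ..., x_{2^k+1}), the conditional density of the interior points given the endpoints factorizes as p(x_2, ..., x_{2^k} | x_1, x_{2^k+1}) = ∏_{i=2}^{2^k} p(x_i | x_{i−f(i)}, x_{i+f(i)}), where f(i) = max{j ∈ ℕ : (i-1) mod 2^j = 0}. -/
/-!
A Markov chain conditioned on `x_a` and `x_b` is again Markov, and for `a < i < b` the density of
`x_i` given `x_a, x_b` is `p(x_i ∣ x_a) p(x_b ∣ x_i) / p(x_b ∣ x_a)`. Conditioning on the midpoint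
`x_{2^(k-1)+1}` splits the bridge from `x_1` to `x_{2^k+1}` into the midpoint factor and two
bridges over blocks of length `2^(k-1)`; the gaps in the upper block repeat those of the lower one
because `v₂(2^j + m) = v₂(m)` for `0 < m < 2^j`. By induction on `k` the product of all bridge
factors telescopes to the chain of one-step transitions divided by `p(x_{2^k+1} ∣ x_1)`.
-/

open Finset

/-- The gap `2^(f i)` where `f i = max {j : (i-1) mod 2^j = 0}` is the largest power of two
dividing `i - 1`; the midpoint `x_i` is conditioned on `x_{i - 2^(f i)}` and `x_{i + 2^(f i)}`. -/
def dyadicGap (i : ℕ) : ℕ := 2 ^ ((i - 1).factorization 2)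

theorem Nat.factorization_pow_add_of_lt {p k m : ℕ} (hp : p.Prime) (hm₀ : m ≠ 0) (hm : m < p ^ k) :
    (p ^ k + m).factorization p = m.factorization p := by
  have : Fact p.Prime := ⟨hp⟩
  have hv : padicValNat p m < k :=
    (padicValNat_le_nat_log m).trans_lt (Nat.log_lt_of_lt_pow hm₀ hm)
  have key := padicValRat.add_eq_of_lt (p := p) (q := m) (r := p ^ k) (by positivity)
    (by exact_mod_cast hm₀) (pow_ne_zero _ (by exact_mod_cast hp.ne_zero))
    (by simpa [padicValRat.pow, hp.ne_zero] using hv)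
  rw [Nat.factorization_def _ hp, Nat.factorization_def _ hp, add_comm]
  exact_mod_cast key

section DyadicBridge

variable {G₀ : Type*} [CommGroupWithZero G₀] (f : ℕ → ℕ → G₀)

/-- The bridge density of the node at offset `n` of a chain started at node `s`; its gap
`2 ^ n.factorization 2` is `dyadicGap (1 + n)`. -/
def dyadicBridgeFactor (s n : ℕ) : G₀ :=
  f (s + n - 2 ^ n.factorization 2) (s + n) * f (s + n) (s + n + 2 ^ n.factorization 2) /
    f (s + n - 2 ^ n.factorization 2) (s + n + 2 ^ n.factorization 2)

theorem dyadicBridgeFactor_add_two_pow {k n : ℕ} (s : ℕ) (hn₀ : n ≠ 0) (hn : n < 2 ^ k) :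
    dyadicBridgeFactor f s (n + 2 ^ k) = dyadicBridgeFactor f (s + 2 ^ k) n := by
  simp only [dyadicBridgeFactor, add_comm n, Nat.factorization_pow_add_of_lt Nat.prime_two hn₀ hn,
    add_assoc]

theorem dyadicBridgeFactor_two_pow (k s : ℕ) :
    dyadicBridgeFactor f s (2 ^ k) =
      f s (s + 2 ^ k) * f (s + 2 ^ k) (s + 2 ^ k + 2 ^ k) / f s (s + 2 ^ k + 2 ^ k) := by
  simp [dyadicBridgeFactor, Nat.Prime.factorization_self Nat.prime_two]

theorem prod_dyadicBridgeFactor_mul (hf : ∀ a b, f a b ≠ 0) (k s : ℕ) :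
    (∏ n ∈ Ico 1 (2 ^ k), dyadicBridgeFactor f s n) * f s (s + 2 ^ k) =
      ∏ n ∈ range (2 ^ k), f (s + n) (s + n + 1) := by
  induction k generalizing s with
  | zero => simp
  | succ k ih =>
    have hm : 1 ≤ 2 ^ k := Nat.one_le_two_pow
    have hshift : ∏ n ∈ Ico 1 (2 ^ k), dyadicBridgeFactor f (s + 2 ^ k) n =
        ∏ n ∈ Ico (2 ^ k + 1) (2 ^ k + 2 ^ k), dyadicBridgeFactor f s n := by
      rw [Nat.add_comm _ 1, ← prod_Ico_add']
      exact prod_congr rfl fun n hn =>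
        (dyadicBridgeFactor_add_two_pow f s (by grind) (mem_Ico.mp hn).2).symm
    rw [pow_succ, mul_two, ← prod_Ico_consecutive _ (by omega) (by omega : 2 ^ k + 1 ≤ _),
      prod_Ico_succ_top hm, ← hshift, dyadicBridgeFactor_two_pow, prod_range_add]
    simp only [← add_assoc]
    rw [← ih, ← ih]
    field_simp [hf]

end DyadicBridge

/-- For a Markov chain `(x_1, …, x_{2^k+1})` with positive transition
densities `tr a b u v` (density of `x_b = v` given `x_a = u`), the conditional density of
the interior points given the two endpoints factorizes as
`p(x_2, …, x_{2^k} ∣ x_1, x_{2^k+1}) = ∏_{i=2}^{2^k} p(x_i ∣ x_{i−f(i)}, x_{i+f(i)})`. -/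
theorem stmt_1 {E : Type*} (k : ℕ)
    (tr : ℕ → ℕ → E → E → ℝ)       -- tr a b u v = transition density of x_b = v given x_a = u
    (condInt : (ℕ → E) → ℝ)        -- conditional density of interior points given endpoints
    (cond : ℕ → ℕ → ℕ → E → E → E → ℝ)  -- cond a i b u v w = p(x_i = v ∣ x_a = u, x_b = w)
    (hpos : ∀ a b u v, 0 < tr a b u v)
    -- Markov property: the conditional density of the interior given the endpoints is the
    -- product of one-step transition densities divided by the endpoint transition density
    (hMarkov : ∀ x, condInt x =
      (∏ i ∈ Icc 1 (2 ^ k), tr i (i + 1) (x i) (x (i + 1))) /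
        tr 1 (2 ^ k + 1) (x 1) (x (2 ^ k + 1)))
    -- conditional density of a midpoint given two surrounding points (Markov bridge formula)
    (hcond : ∀ a i b u v w, cond a i b u v w = tr a i u v * tr i b v w / tr a b u w)
    (x : ℕ → E) :
    condInt x = ∏ i ∈ Icc 2 (2 ^ k),
        cond (i - dyadicGap i) i (i + dyadicGap i)
          (x (i - dyadicGap i)) (x i) (x (i + dyadicGap i)) := by
  set f : ℕ → ℕ → ℝ := fun a b => tr a b (x a) (x b)
  have hf : ∀ a b, f a b ≠ 0 := fun a b => (hpos _ _ _ _).ne'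
  have hsteps : ∏ i ∈ Icc 1 (2 ^ k), tr i (i + 1) (x i) (x (i + 1)) =
      ∏ n ∈ range (2 ^ k), f (1 + n) (1 + n + 1) := by
    rw [← Ico_add_one_right_eq_Icc, prod_Ico_eq_prod_range, Nat.add_sub_cancel]
  have hbridges : ∏ i ∈ Icc 2 (2 ^ k), cond (i - dyadicGap i) i (i + dyadicGap i)
        (x (i - dyadicGap i)) (x i) (x (i + dyadicGap i)) =
      ∏ n ∈ Ico 1 (2 ^ k), dyadicBridgeFactor f 1 n := by
    rw [← Ico_add_one_right_eq_Icc]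
    refine (prod_Ico_add _ 1 _ 1).symm.trans (prod_congr rfl fun n _ => ?_)
    simp only [hcond, dyadicBridgeFactor, dyadicGap, Nat.add_sub_cancel_left, f]
  rw [hMarkov x, hsteps, hbridges, ← prod_dyadicBridgeFactor_mul f hf, add_comm 1 (2 ^ k)]
  exact mul_div_cancel_right₀ _ (hf _ _)
end

section
/- The denoising score matching identity: for each t, E_{x_t}‖∇ log p_t(x_t) − s(x_t)‖² = E_{x_0} E_{x_t|x_0}‖∇ log p_t(x_t | x_0) − s(x_t)‖² + C, where C does not depend on s. In particular, the two objectives have the same minimizers over s. -/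
open MeasureTheory

/-- The marginal density `p_t(x_t) = ∫ p_t(x_t ∣ x_0) p_0(x_0) dx_0`, where `pc x0 x =
p_t(x ∣ x0)` is the conditional density and `p0` the initial density. -/
noncomputable def margDens {d : ℕ} (p0 : EuclideanSpace ℝ (Fin d) → ℝ)
    (pc : EuclideanSpace ℝ (Fin d) → EuclideanSpace ℝ (Fin d) → ℝ) :
    EuclideanSpace ℝ (Fin d) → ℝ :=
  fun x => ∫ x0, p0 x0 * pc x0 x

/-- The joint law of `(x_0, x_t)`, with density `p_0(x_0) p_t(x_t ∣ x_0)`. -/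
noncomputable def jointLaw {d : ℕ} (p0 : EuclideanSpace ℝ (Fin d) → ℝ)
    (pc : EuclideanSpace ℝ (Fin d) → EuclideanSpace ℝ (Fin d) → ℝ) :
    Measure (EuclideanSpace ℝ (Fin d) × EuclideanSpace ℝ (Fin d)) :=
  (volume.prod volume).withDensity fun z => ENNReal.ofReal (p0 z.1 * pc z.1 z.2)

/-!
Since `p_t ∇ log p_t = ∇ p_t = ∫ p_0(x_0) ∇ p_t(· ∣ x_0) dx_0
= ∫ p_0(x_0) p_t(· ∣ x_0) ∇ log p_t(· ∣ x_0) dx_0`, the conditional score averages to the marginal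
score, so the cross terms `E⟨∇ log p_t(x_t), s(x_t)⟩` and `E⟨∇ log p_t(x_t ∣ x_0), s(x_t)⟩`
coincide; expanding both squares then leaves `C = E‖∇ log p_t(x_t)‖² - E‖∇ log p_t(x_t ∣ x_0)‖²`.
With no domination hypothesis to differentiate under the integral sign,
`∇ p_t = ∫ p_0 ∇ p_t(· ∣ x_0)` is obtained almost everywhere, in the weak sense: both sides have the
same integral against every test function, by integration by parts and Fubini.
-/

open Function
open scoped InnerProductSpace Gradient

section Score

variable {F : Type*} [NormedAddCommGroup F] [InnerProductSpace ℝ F] [CompleteSpace F]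

theorem ContDiff.continuous_gradient {f : F → ℝ} (hf : ContDiff ℝ 1 f) : Continuous (∇ f) :=
  (InnerProductSpace.toDual ℝ F).symm.continuous.comp (hf.continuous_fderiv one_ne_zero)

theorem HasCompactSupport.gradient {f : F → ℝ} (hf : HasCompactSupport f) :
    HasCompactSupport (∇ f) :=
  (hf.fderiv ℝ).comp_left (map_zero _)

noncomputable def score (f : F → ℝ) : F → F := ∇ fun y => Real.log (f y)

theorem smul_score {f : F → ℝ} {x : F} (hf : DifferentiableAt ℝ f x) (hx : f x ≠ 0) :
    f x • score f x = ∇ f x := by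
  rw [score, gradient, (hf.hasFDerivAt.log hx).fderiv, map_smul, smul_inv_smul₀ hx, gradient]

theorem score_const_mul {c : ℝ} (hc : c ≠ 0) {f : F → ℝ} (hf : ∀ y, f y ≠ 0) :
    score (fun y => c * f y) = score f := by
  have hlog : (fun y => Real.log (c * f y)) = fun y => Real.log c + Real.log (f y) :=
    funext fun y => Real.log_mul hc (hf y)
  ext1 x
  rw [score, hlog, gradient, fderiv_const_add, score, gradient]

end Score

section L2

variable {α F : Type*} [MeasurableSpace α] {μ : Measure α} [NormedAddCommGroup F]
  [InnerProductSpace ℝ F]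

theorem MeasureTheory.MemLp.integrable_inner {f g : α → F} (hf : MemLp f 2 μ)
    (hg : MemLp g 2 μ) : Integrable (fun x => ⟪f x, g x⟫_ℝ) μ := by
  refine (L2.integrable_inner (𝕜 := ℝ) (hf.toLp f) (hg.toLp g)).congr ?_
  filter_upwards [hf.coeFn_toLp, hg.coeFn_toLp] with x hfx hgx
  rw [hfx, hgx]

theorem integral_norm_sub_sq {f g : α → F} (hf : MemLp f 2 μ) (hg : MemLp g 2 μ) :
    ∫ x, ‖f x - g x‖ ^ 2 ∂μ
      = ∫ x, ‖f x‖ ^ 2 ∂μ - 2 * ∫ x, ⟪f x, g x⟫_ℝ ∂μ + ∫ x, ‖g x‖ ^ 2 ∂μ := by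
  have hf2 := (memLp_two_iff_integrable_sq_norm hf.1).1 hf
  have hg2 := (memLp_two_iff_integrable_sq_norm hg.1).1 hg
  have hfg := (hf.integrable_inner hg).const_mul 2
  have hdiff : Integrable (fun x => ‖f x‖ ^ 2 - 2 * ⟪f x, g x⟫_ℝ) μ := hf2.sub hfg
  simp_rw [norm_sub_sq_real]
  rw [integral_add hdiff hg2, integral_sub hf2 hfg, integral_const_mul]

theorem integral_norm_sub_sq_eq_of_integral_inner_eq {f g t : α → F} (hf : MemLp f 2 μ)
    (hg : MemLp g 2 μ) (ht : MemLp t 2 μ) (h : ∫ x, ⟪f x, t x⟫_ℝ ∂μ = ∫ x, ⟪g x, t x⟫_ℝ ∂μ) :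
    ∫ x, ‖f x - t x‖ ^ 2 ∂μ
      = ∫ x, ‖g x - t x‖ ^ 2 ∂μ + (∫ x, ‖f x‖ ^ 2 ∂μ - ∫ x, ‖g x‖ ^ 2 ∂μ) := by
  rw [integral_norm_sub_sq hf ht, integral_norm_sub_sq hg ht, h]
  ring

end L2

section WithDensity

variable {α V : Type*} [MeasurableSpace α] {μ : Measure α} {q : α → ℝ} [NormedAddCommGroup V]
  [NormedSpace ℝ V]

theorem integrable_withDensity_ofReal_iff (hq : Measurable q) (hq0 : 0 ≤ q) {f : α → V} :
    Integrable f (μ.withDensity fun x => ENNReal.ofReal (q x))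
      ↔ Integrable (fun x => q x • f x) μ := by
  rw [integrable_withDensity_iff_integrable_smul' hq.ennreal_ofReal
    (.of_forall fun _ => ENNReal.ofReal_lt_top)]
  simp_rw [ENNReal.toReal_ofReal (hq0 _)]

theorem integral_withDensity_ofReal (hq : Measurable q) (hq0 : 0 ≤ q) (f : α → V) :
    ∫ x, f x ∂μ.withDensity (fun x => ENNReal.ofReal (q x)) = ∫ x, q x • f x ∂μ := by
  rw [integral_withDensity_eq_integral_toReal_smul hq.ennreal_ofReal
    (.of_forall fun _ => ENNReal.ofReal_lt_top)]
  simp_rw [ENNReal.toReal_ofReal (hq0 _)]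

theorem integrable_of_isFiniteMeasure_withDensity_ofReal (hq : Measurable q) (hq0 : 0 ≤ q)
    [IsFiniteMeasure (μ.withDensity fun x => ENNReal.ofReal (q x))] : Integrable q μ := by
  have hfin : ∫⁻ x, ENNReal.ofReal (q x) ∂μ ≠ ⊤ := by
    simpa using measure_ne_top (μ.withDensity fun x => ENNReal.ofReal (q x)) Set.univ
  simpa [ENNReal.toReal_ofReal (hq0 _)] using
    integrable_toReal_of_lintegral_ne_top hq.ennreal_ofReal.aemeasurable hfin

end WithDensity

section Marginal

variable {E : Type*} [NormedAddCommGroup E] [InnerProductSpace ℝ E] [FiniteDimensional ℝ E]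
  [MeasurableSpace E] [BorelSpace E] {μ : Measure E} [μ.IsAddHaarMeasure]

theorem integral_smul_gradient_eq_neg {f g : E → ℝ} (hf : ContDiff ℝ 1 f) (hg : ContDiff ℝ 1 g)
    (hg_supp : HasCompactSupport g) :
    ∫ x, g x • ∇ f x ∂μ = -∫ x, f x • ∇ g x ∂μ := by
  have hgf : Integrable (fun x => g x • ∇ f x) μ :=
    (hg.continuous.smul hf.continuous_gradient).integrable_of_hasCompactSupport
      hg_supp.smul_right
  have hfg : Integrable (fun x => f x • ∇ g x) μ :=
    (hf.continuous.smul hg.continuous_gradient).integrable_of_hasCompactSupport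
      hg_supp.gradient.smul_left
  refine ext_inner_right ℝ fun v => ?_
  rw [inner_neg_left, real_inner_comm, ← integral_inner hgf, real_inner_comm, ← integral_inner hfg]
  simp only [real_inner_smul_right, inner_gradient_right, conj_trivial]
  have hg' : Continuous (fderiv ℝ g · v) :=
    (hg.continuous_fderiv one_ne_zero).clm_apply continuous_const
  have hf' : Continuous (fderiv ℝ f · v) :=
    (hf.continuous_fderiv one_ne_zero).clm_apply continuous_const
  rw [integral_mul_fderiv_eq_neg_fderiv_mul_of_integrable
    ((hg'.mul hf.continuous).integrable_of_hasCompactSupport (hg_supp.fderiv_apply ℝ v).mul_right)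
    ((hg.continuous.mul hf').integrable_of_hasCompactSupport hg_supp.mul_right)
    ((hg.continuous.mul hf.continuous).integrable_of_hasCompactSupport hg_supp.mul_right)
    (fun x _ => hg.differentiable one_ne_zero x) (fun x _ => hf.differentiable one_ne_zero x)]
  simp_rw [mul_comm]

variable {α : Type*} [MeasurableSpace α] {ν : Measure α} [SFinite ν]

theorem ae_gradient_integral_eq_integral_gradient {k : α → E → ℝ}
    (hk : ∀ a, ContDiff ℝ 1 (k a)) (hk_int : Integrable (uncurry k) (ν.prod μ))
    (hgrad_int : Integrable (fun z : α × E => ∇ (k z.1) z.2) (ν.prod μ))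
    (hm : ContDiff ℝ 1 fun x => ∫ a, k a x ∂ν) :
    ∀ᵐ x ∂μ, ∇ (fun x => ∫ a, k a x ∂ν) x = ∫ a, ∇ (k a) x ∂ν := by
  refine ae_eq_of_integral_contDiff_smul_eq hm.continuous_gradient.locallyIntegrable
    hgrad_int.integral_prod_right.locallyIntegrable fun g hg hg_supp => ?_
  have hg1 : ContDiff ℝ 1 g := hg.of_le (by simp)
  obtain ⟨C, hC⟩ := hg.continuous.bounded_above_of_compact_support hg_supp
  obtain ⟨C', hC'⟩ :=
    hg1.continuous_gradient.bounded_above_of_compact_support hg_supp.gradient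
  have hswap₁ : Integrable (fun z : α × E => k z.1 z.2 • ∇ g z.2) (ν.prod μ) :=
    hk_int.smul_bdd C' hg1.continuous_gradient.stronglyMeasurable.comp_snd.aestronglyMeasurable
      (.of_forall fun z => hC' z.2)
  have hswap₂ : Integrable (fun z : α × E => g z.2 • ∇ (k z.1) z.2) (ν.prod μ) :=
    hgrad_int.bdd_smul C hg.continuous.stronglyMeasurable.comp_snd.aestronglyMeasurable
      (.of_forall fun z => hC z.2)
  calc ∫ x, g x • ∇ (fun x => ∫ a, k a x ∂ν) x ∂μ
      = -∫ x, (∫ a, k a x ∂ν) • ∇ g x ∂μ := integral_smul_gradient_eq_neg hm hg1 hg_supp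
    _ = -∫ a, ∫ x, k a x • ∇ g x ∂μ ∂ν := by
      simp_rw [← integral_smul_const]
      rw [integral_integral_swap (f := fun a x => k a x • ∇ g x) hswap₁]
    _ = ∫ a, ∫ x, g x • ∇ (k a) x ∂μ ∂ν := by
      rw [← integral_neg]
      congr 1 with a
      rw [integral_smul_gradient_eq_neg (hk a) hg1 hg_supp]
    _ = ∫ x, g x • ∫ a, ∇ (k a) x ∂ν ∂μ := by
      simp_rw [← integral_smul]
      exact integral_integral_swap (f := fun a x => g x • ∇ (k a) x) hswap₂

theorem integral_inner_score_marginal_eq_integral_inner_score_joint {k : α → E → ℝ}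
    (hk_pos : ∀ a x, 0 < k a x) (hk : ∀ a, ContDiff ℝ 1 (k a)) (hk_meas : Measurable (uncurry k))
    (hm_pos : ∀ x, 0 < ∫ a, k a x ∂ν) (hm : ContDiff ℝ 1 fun x => ∫ a, k a x ∂ν)
    {J : Measure (α × E)} (hJ : J = (ν.prod μ).withDensity fun z => ENNReal.ofReal (uncurry k z))
    [IsFiniteMeasure J] {s : E → E}
    (hsm : MemLp (fun z : α × E => score (fun x => ∫ a, k a x ∂ν) z.2) 2 J)
    (hsk : MemLp (fun z : α × E => score (k z.1) z.2) 2 J)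
    (hs : MemLp (fun z : α × E => s z.2) 2 J) :
    ∫ z, ⟪score (fun x => ∫ a, k a x ∂ν) z.2, s z.2⟫_ℝ ∂J
      = ∫ z, ⟪score (k z.1) z.2, s z.2⟫_ℝ ∂J := by
  set m := fun x => ∫ a, k a x ∂ν
  have hk0 : 0 ≤ uncurry k := fun z => (hk_pos z.1 z.2).le
  have hk_int : Integrable (uncurry k) (ν.prod μ) := by
    subst hJ
    exact integrable_of_isFiniteMeasure_withDensity_ofReal hk_meas hk0
  have hJ_integral : ∀ f : α × E → ℝ, Integrable f J →
      ∫ z, f z ∂J = ∫ x, ∫ a, k a x * f (a, x) ∂ν ∂μ := by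
    intro f hf
    rw [hJ, integrable_withDensity_ofReal_iff hk_meas hk0] at hf
    rw [hJ, integral_withDensity_ofReal hk_meas hk0]
    exact integral_prod_symm _ hf
  have hgrad_int : Integrable (fun z : α × E => ∇ (k z.1) z.2) (ν.prod μ) := by
    have := hsk.integrable one_le_two
    rw [hJ, integrable_withDensity_ofReal_iff hk_meas hk0] at this
    exact this.congr (.of_forall fun z =>
      smul_score ((hk z.1).differentiable one_ne_zero z.2) (hk_pos z.1 z.2).ne')
  have hweak := ae_gradient_integral_eq_integral_gradient hk hk_int hgrad_int hm
  calc ∫ z, ⟪score m z.2, s z.2⟫_ℝ ∂J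
      = ∫ x, ∫ a, k a x * ⟪score m x, s x⟫_ℝ ∂ν ∂μ :=
        hJ_integral _ (hsm.integrable_inner hs)
    _ = ∫ x, ⟪∇ m x, s x⟫_ℝ ∂μ := by
        congr 1 with x
        rw [integral_mul_const, ← smul_score (hm.differentiable one_ne_zero x) (hm_pos x).ne',
          real_inner_smul_left]
    _ = ∫ x, ⟪∫ a, ∇ (k a) x ∂ν, s x⟫_ℝ ∂μ := integral_congr_ae <| by
        filter_upwards [hweak] with x hx
        rw [hx]
    _ = ∫ x, ∫ a, ⟪∇ (k a) x, s x⟫_ℝ ∂ν ∂μ := integral_congr_ae <| by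
        filter_upwards [hgrad_int.prod_left_ae] with x hx
        simp_rw [real_inner_comm (s x)]
        exact (integral_inner hx (s x)).symm
    _ = ∫ x, ∫ a, k a x * ⟪score (k a) x, s x⟫_ℝ ∂ν ∂μ := by
        congr 1 with x
        congr 1 with a
        rw [← real_inner_smul_left,
          smul_score ((hk a).differentiable one_ne_zero x) (hk_pos a x).ne']
    _ = ∫ z, ⟪score (k z.1) z.2, s z.2⟫_ℝ ∂J := (hJ_integral _ (hsk.integrable_inner hs)).symm

end Marginal

/-- **denoising score matching identity.** For each `t`,
`E_{x_t} ‖∇ log p_t(x_t) − s(x_t)‖² = E_{x_0} E_{x_t ∣ x_0} ‖∇ log p_t(x_t ∣ x_0) − s(x_t)‖² + C`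
where `C` does not depend on `s`; here `s` ranges over square-integrable vector fields,
`p_t(x_t) = ∫ p_t(x_t ∣ x_0) p_0(x_0) dx_0`, and expectations are with respect to the joint
law of `(x_0, x_t)` (resp. its second marginal).  In particular the two objectives have the
same minimizers over `s`. -/
theorem stmt_14 {d : ℕ}
    (p0 : EuclideanSpace ℝ (Fin d) → ℝ)
    (pc : EuclideanSpace ℝ (Fin d) → EuclideanSpace ℝ (Fin d) → ℝ)
    (hp0pos : ∀ x, 0 < p0 x) (hpcpos : ∀ x0 x, 0 < pc x0 x)
    (hp0smooth : ContDiff ℝ (⊤ : ℕ∞) p0)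
    (hpcsmooth : ContDiff ℝ (⊤ : ℕ∞) (Function.uncurry pc))
    (hmargsmooth : ContDiff ℝ (⊤ : ℕ∞) (margDens p0 pc))
    (hmargpos : ∀ x, 0 < margDens p0 pc x)
    [IsProbabilityMeasure (jointLaw p0 pc)]
    -- square-integrability of the marginal and conditional scores
    (hL2marg : MemLp (fun x => gradient (fun y => Real.log (margDens p0 pc y)) x) 2
      ((jointLaw p0 pc).map Prod.snd))
    (hL2cond : MemLp (fun z : EuclideanSpace ℝ (Fin d) × EuclideanSpace ℝ (Fin d) =>
      gradient (fun y => Real.log (pc z.1 y)) z.2) 2 (jointLaw p0 pc)) :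
    ∃ C : ℝ, ∀ s : EuclideanSpace ℝ (Fin d) → EuclideanSpace ℝ (Fin d),
      MemLp s 2 ((jointLaw p0 pc).map Prod.snd) →
      ∫ x, ‖gradient (fun y => Real.log (margDens p0 pc y)) x - s x‖ ^ 2
          ∂((jointLaw p0 pc).map Prod.snd)
        = (∫ z, ‖gradient (fun y => Real.log (pc z.1 y)) z.2 - s z.2‖ ^ 2
            ∂(jointLaw p0 pc)) + C := by
  set μ := jointLaw p0 pc
  have hsnd : MeasurePreserving Prod.snd μ (μ.map Prod.snd) := ⟨measurable_snd, rfl⟩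
  have hmarg := hL2marg.comp_measurePreserving hsnd
  have hscore : ∀ a, score (fun x => p0 a * pc a x) = score (pc a) := fun a =>
    score_const_mul (hp0pos a).ne' fun x => (hpcpos a x).ne'
  have hL2score : MemLp (fun z => score (pc z.1) z.2) 2 μ := hL2cond
  refine ⟨∫ z, ‖score (margDens p0 pc) z.2‖ ^ 2 ∂μ - ∫ z, ‖score (pc z.1) z.2‖ ^ 2 ∂μ,
    fun s hs => ?_⟩
  have hs' := hs.comp_measurePreserving hsnd
  have hcross : ∫ z, ⟪score (margDens p0 pc) z.2, s z.2⟫_ℝ ∂μ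
      = ∫ z, ⟪score (pc z.1) z.2, s z.2⟫_ℝ ∂μ := by
    have h := integral_inner_score_marginal_eq_integral_inner_score_joint
      (ν := volume) (μ := volume) (J := μ) (k := fun a x => p0 a * pc a x)
      (fun a x => mul_pos (hp0pos a) (hpcpos a x))
      (fun a => contDiff_const.mul ((hpcsmooth.comp (contDiff_prodMk_right a)).of_le (by simp)))
      ((hp0smooth.continuous.comp continuous_fst).mul hpcsmooth.continuous).measurable
      hmargpos (hmargsmooth.of_le (by simp)) rfl hmarg (by simpa only [hscore] using hL2score) hs'
    simp only [hscore] at h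
    exact h
  refine (integral_map measurable_snd.aemeasurable ((hL2marg.1.sub hs.1).norm.pow 2)).trans ?_
  exact integral_norm_sub_sq_eq_of_integral_inner_eq hmarg hL2cond hs' hcross
end

section
/- Let x(t) be a continuous-time Markov process and t_1 < t_2 < ... < t_{2^k+1} arbitrary times. With f(i) = max{j ∈ ℕ : (i−1) mod 2^j = 0}, the finite-dimensional joint density factorizes as p(x(t_1), ..., x(t_{2^k+1})) = p(x(t_1)) · p(x(t_{2^k+1}) | x(t_1)) · ∏_{i=2}^{2^k} p(x(t_i) | x(t_{i−f(i)}), x(t_{i+f(i)})). -/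
/-
The dyadic midpoints of `[1, 2^(k+1)+1]` are those of `[1, 2^k+1]`, the midpoint `2^k+1`, and
those of `[2^k+1, 2^(k+1)+1]`; the last have the gaps of the first half shifted by `2^k`, since
adding `2^k` to a positive number below `2^k` does not change its 2-adic valuation. The bridge
factor at the midpoint, `g 1 m * g m e / g 1 e`, replaces the transition over the whole interval
by the two half-interval transitions, so induction on `k` telescopes the bridge product into the
chain of one-step transitions, which is the Markov factorization of the joint density.
-/

open Finset

theorem Finset.prod_Ioc_add' {M : Type*} [CommMonoid M] (f : ℕ → M) (a b c : ℕ) :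
    ∏ x ∈ Ioc a b, f (x + c) = ∏ x ∈ Ioc (a + c) (b + c), f x := by
  rw [← map_add_right_Ioc, prod_map]
  rfl

theorem Nat.factorization_two_add_two_pow {a k : ℕ} (ha : a ≠ 0) (hak : a < 2 ^ k) :
    (a + 2 ^ k).factorization 2 = a.factorization 2 := by
  set m := a.factorization 2
  have hmk : m < k :=
    (Nat.pow_lt_pow_iff_right one_lt_two).1 ((Nat.ordProj_le 2 ha).trans_lt hak)
  have hpow : ∀ {j}, 2 ^ j ∣ a + 2 ^ k ↔ j ≤ (a + 2 ^ k).factorization 2 :=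
    Nat.prime_two.pow_dvd_iff_le_factorization (by positivity)
  refine le_antisymm ?_ (hpow.1 (dvd_add (Nat.ordProj_dvd a 2) (pow_dvd_pow 2 hmk.le)))
  by_contra! h
  exact Nat.pow_succ_factorization_not_dvd ha Nat.prime_two
    ((Nat.dvd_add_left (pow_dvd_pow 2 hmk)).1 (hpow.2 h))

lemma dyadicGap_le_sub_one {i : ℕ} (hi : 2 ≤ i) : dyadicGap i ≤ i - 1 :=
  Nat.le_of_dvd (by omega) (Nat.ordProj_dvd _ 2)

lemma dyadicGap_two_pow_add_one (k : ℕ) : dyadicGap (2 ^ k + 1) = 2 ^ k := by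
  simp [dyadicGap, Nat.prime_two.factorization_pow]

lemma dyadicGap_add_two_pow {i k : ℕ} (hi : 2 ≤ i) (hik : i ≤ 2 ^ k) :
    dyadicGap (i + 2 ^ k) = dyadicGap i := by
  rw [dyadicGap, dyadicGap, show i + 2 ^ k - 1 = (i - 1) + 2 ^ k by omega,
    Nat.factorization_two_add_two_pow (by omega) (by omega)]

section Bridge

variable {G : Type*} [CommGroupWithZero G]

/-- With `g a b` the transition density from time `t_a` to time `t_b`, this is the bridge density
`p(x(t_i) ∣ x(t_{i-f(i)}), x(t_{i+f(i)}))`. -/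
def dyadicBridge (g : ℕ → ℕ → G) (i : ℕ) : G :=
  g (i - dyadicGap i) i * g i (i + dyadicGap i) / g (i - dyadicGap i) (i + dyadicGap i)

lemma dyadicBridge_two_pow_add_one (g : ℕ → ℕ → G) (k : ℕ) :
    dyadicBridge g (2 ^ k + 1) =
      g 1 (2 ^ k + 1) * g (2 ^ k + 1) (2 ^ k + 2 ^ k + 1) / g 1 (2 ^ k + 2 ^ k + 1) := by
  simp only [dyadicBridge, dyadicGap_two_pow_add_one, Nat.add_sub_cancel_left,
    Nat.add_right_comm _ 1 (2 ^ k)]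

lemma dyadicBridge_add_two_pow (g : ℕ → ℕ → G) {i k : ℕ} (hi : 2 ≤ i) (hik : i ≤ 2 ^ k) :
    dyadicBridge g (i + 2 ^ k) = dyadicBridge (fun a b ↦ g (a + 2 ^ k) (b + 2 ^ k)) i := by
  have hgap : dyadicGap i ≤ i := (dyadicGap_le_sub_one hi).trans (Nat.sub_le i 1)
  simp only [dyadicBridge, dyadicGap_add_two_pow hi hik, Nat.sub_add_comm hgap,
    Nat.add_right_comm i (2 ^ k)]

theorem mul_prod_dyadicBridge (g : ℕ → ℕ → G) (hg : ∀ a b, g a b ≠ 0) (k : ℕ) :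
    g 1 (2 ^ k + 1) * ∏ i ∈ Icc 2 (2 ^ k), dyadicBridge g i =
      ∏ i ∈ Icc 1 (2 ^ k), g i (i + 1) := by
  induction k generalizing g with
  | zero => simp
  | succ k ih =>
    set N := 2 ^ k with hN
    have hN1 : 1 ≤ N := Nat.one_le_two_pow
    have hIcc₁ (n : ℕ) : Icc 1 n = Ioc 0 n := Icc_add_one_left_eq_Ioc 0 n
    have hIcc₂ (n : ℕ) : Icc 2 n = Ioc 1 n := Icc_add_one_left_eq_Ioc 1 n
    set g' : ℕ → ℕ → G := fun a b ↦ g (a + N) (b + N)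
    have hB : ∏ i ∈ Icc 2 (N + N), dyadicBridge g i =
        (∏ i ∈ Icc 2 N, dyadicBridge g i) * dyadicBridge g (N + 1) *
          ∏ i ∈ Icc 2 N, dyadicBridge g' i := by
      simp only [hIcc₂]
      rw [← prod_Ioc_consecutive _ (by omega : 1 ≤ N + 1) (by omega : N + 1 ≤ N + N),
        prod_Ioc_succ_top hN1, add_comm N 1, ← prod_Ioc_add']
      congr 1
      refine prod_congr rfl fun i hi ↦ ?_
      rw [mem_Ioc] at hi
      exact dyadicBridge_add_two_pow g (by omega) hi.2
    have hC : ∏ i ∈ Icc 1 (N + N), g i (i + 1) =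
        (∏ i ∈ Icc 1 N, g i (i + 1)) * ∏ i ∈ Icc 1 N, g' i (i + 1) := by
      simp only [hIcc₁]
      rw [← prod_Ioc_consecutive _ (Nat.zero_le N) (by omega : N ≤ N + N)]
      congr 1
      simpa [g', Nat.add_right_comm _ 1 N] using (prod_Ioc_add' (fun i ↦ g i (i + 1)) 0 N N).symm
    rw [pow_succ, mul_two, hB, hC, ← ih g hg, ← ih g' fun _ _ ↦ hg _ _,
      dyadicBridge_two_pow_add_one, ← hN]
    simp only [g', Nat.add_comm 1 N]
    field_simp [hg]
    ac_rfl

end Bridge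

theorem stmt_17_general {E : Type*} (k : ℕ) (t : ℕ → ℝ)
    (p : (ℕ → E) → ℝ)              -- joint density of (x(t_1), …, x(t_{2^k+1}))
    (p1 : E → ℝ)                   -- density of x(t_1)
    (tr : ℝ → ℝ → E → E → ℝ)       -- tr s t u v = transition density of x(t) = v given x(s) = u
    (cond : ℝ → ℝ → ℝ → E → E → E → ℝ) -- cond s1 s2 s3 u v w = p(x(s2) = v ∣ x(s1) = u, x(s3) = w)
    (hpos : ∀ s1 s2 u v, 0 < tr s1 s2 u v)
    -- Markov property: the joint density is the product of one-step transition densities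
    (hMarkov : ∀ x, p x =
      p1 (x 1) * ∏ i ∈ Icc 1 (2 ^ k), tr (t i) (t (i + 1)) (x i) (x (i + 1)))
    -- conditional density of a midpoint given two surrounding points (Markov bridge formula)
    (hcond : ∀ s1 s2 s3 u v w, cond s1 s2 s3 u v w =
      tr s1 s2 u v * tr s2 s3 v w / tr s1 s3 u w)
    (x : ℕ → E) :
    p x = p1 (x 1) * tr (t 1) (t (2 ^ k + 1)) (x 1) (x (2 ^ k + 1)) *
      ∏ i ∈ Icc 2 (2 ^ k),
        cond (t (i - dyadicGap i)) (t i) (t (i + dyadicGap i))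
          (x (i - dyadicGap i)) (x i) (x (i + dyadicGap i)) := by
  rw [hMarkov x, mul_assoc, ← mul_prod_dyadicBridge (fun a b ↦ tr (t a) (t b) (x a) (x b))
    (fun a b ↦ (hpos _ _ _ _).ne') k]
  simp only [dyadicBridge, hcond]

/-- Let `x(t)` be a continuous-time Markov process with positive transition
densities `tr s t u v` (density of `x(t) = v` given `x(s) = u`), and let
`t_1 < t_2 < … < t_{2^k+1}` be arbitrary times.  The finite-dimensional joint density
factorizes as
`p(x(t_1), …, x(t_{2^k+1})) = p(x(t_1)) · p(x(t_{2^k+1}) ∣ x(t_1)) ·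
   ∏_{i=2}^{2^k} p(x(t_i) ∣ x(t_{i−f(i)}), x(t_{i+f(i)}))`. -/
theorem stmt_17 {E : Type*} (k : ℕ) (t : ℕ → ℝ) (hmono : StrictMono t)
    (p : (ℕ → E) → ℝ)              -- joint density of (x(t_1), …, x(t_{2^k+1}))
    (p1 : E → ℝ)                   -- density of x(t_1)
    (tr : ℝ → ℝ → E → E → ℝ)       -- tr s t u v = transition density of x(t) = v given x(s) = u
    (cond : ℝ → ℝ → ℝ → E → E → E → ℝ) -- cond s1 s2 s3 u v w = p(x(s2) = v ∣ x(s1) = u, x(s3) = w)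
    (hpos : ∀ s1 s2 u v, 0 < tr s1 s2 u v)
    (hp1pos : ∀ u, 0 < p1 u)
    -- Markov property: the joint density is the product of one-step transition densities
    (hMarkov : ∀ x, p x =
      p1 (x 1) * ∏ i ∈ Icc 1 (2 ^ k), tr (t i) (t (i + 1)) (x i) (x (i + 1)))
    -- conditional density of a midpoint given two surrounding points (Markov bridge formula)
    (hcond : ∀ s1 s2 s3 u v w, cond s1 s2 s3 u v w =
      tr s1 s2 u v * tr s2 s3 v w / tr s1 s3 u w)
    (x : ℕ → E) :
    p x = p1 (x 1) * tr (t 1) (t (2 ^ k + 1)) (x 1) (x (2 ^ k + 1)) *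
      ∏ i ∈ Icc 2 (2 ^ k),
        cond (t (i - dyadicGap i)) (t i) (t (i + dyadicGap i))
          (x (i - dyadicGap i)) (x i) (x (i + dyadicGap i)) :=
  stmt_17_general k t p p1 tr cond hpos hMarkov hcond x
end
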